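/- In the constant-marginal-cost posted-price model: (i) for every Borel probability measure G on [0,1], the set R*(G) is nonempty and compact; (ii) if k ∈ [0,1/2], then V_k^{pp} = Q̄·(1−k)·(1−M), and the unique maximizing pair is (G,r) = (δ₁, 1), where δ₁ is the point mass at 1; (iii) if k ∈ (1/2,1], set r_k := M + (1−M)·e^{−(2k−1)/k} ∈ (M,1) and let G_k be the probability measure on [0,1] with CDF G_k(v) = 0 for v < r_k, G_k(v) = 1 − (r_k−M)/(v−M) for r_k ≤ v < 1, and G_k(1) = 1. Then (G_k, r_k) is the unique maximizing pair, V_k^{pp} = Q̄·k·(1−M)·e^{−(2k−1)/k}, Π_{G_k}(r_k) = Q̄·(1−M)·e^{−(2k−1)/k}, and CS_{G_k}(r_k) = Q̄·(1−M)·e^{−(2k−1)/k}·(2k−1)/k. -/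

import Mathlib

/-!
For `r ∈ R*(G)` with `M < r`, put `c = (r - M) S_G(r)` and `t = log ((1 - M) / (r - M))`.
Optimality of `r` gives `S_G(v) ≤ c / (v - M)` on `[r, 1]`, hence `∫_r^1 S_G ≤ c t`; together
with `c ≤ r - M = (1 - M) e^{-t}` this yields `J_k(G, r) ≤ Q̄ (1 - M) e^{-t} (k t + 1 - k)`, whose
right side is maximal exactly at `t = max 0 ((2k - 1) / k)`. Equality forces this `t`,
`S_G(r) = 1`, and `S_G(v) = c / (v - M)` almost everywhere on `[r, 1]`, hence everywhere there
since `S_G` is left-continuous: `G` is the shifted equal-revenue distribution with an atom at `1`,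
which is `δ₁` when `k ≤ 1/2`. Part (i) holds because `r ↦ (r - M) S_G(r)` is upper
semicontinuous, `S_G` being antitone and left-continuous. The cutoff `r = M` gives `J_k = 0`.
-/

open MeasureTheory Set Filter

namespace PostedPrice

/-- `G` is a Borel probability measure on `[0,1]`. -/
def ProbOn01 (G : Measure ℝ) : Prop :=
  IsProbabilityMeasure G ∧ G (Set.Icc 0 1) = 1

/-- Survival function `S_G(v) = G([v,1])`. -/
noncomputable def SG (G : Measure ℝ) (v : ℝ) : ℝ := (G (Set.Icc v 1)).toReal

/-- Seller profit from posting cutoff price `r`: `Π_G(r) = Q̄·(r−M)·S_G(r)`. -/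
noncomputable def PiG (Qbar M : ℝ) (G : Measure ℝ) (r : ℝ) : ℝ :=
  Qbar * (r - M) * SG G r

/-- Consumer surplus from cutoff price `r`: `CS_G(r) = Q̄·∫_r^1 S_G(v) dv`. -/
noncomputable def CSG (Qbar : ℝ) (G : Measure ℝ) (r : ℝ) : ℝ :=
  Qbar * ∫ v in r..1, SG G v

/-- The seller-optimal posted-price cutoffs `R*(G)`. -/
def Rstar (M : ℝ) (G : Measure ℝ) : Set ℝ :=
  {r ∈ Set.Icc M 1 | ∀ r' ∈ Set.Icc M 1, (r' - M) * SG G r' ≤ (r - M) * SG G r}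

/-- Weighted objective `J_k(G,r)`. -/
noncomputable def Jpp (Qbar M k : ℝ) (G : Measure ℝ) (r : ℝ) : ℝ :=
  k * CSG Qbar G r + (1 - k) * PiG Qbar M G r

/-- Optimal value of the upstream problem, `V_k^{pp}`. -/
noncomputable def Vpp (Qbar M k : ℝ) : ℝ :=
  sSup {x | ∃ G : Measure ℝ, ProbOn01 G ∧ ∃ r ∈ Rstar M G, x = Jpp Qbar M k G r}

/-- `r_k = M + (1−M)·e^{−(2k−1)/k}`. -/
noncomputable def rkFun (M k : ℝ) : ℝ := M + (1 - M) * Real.exp (-(2*k - 1)/k)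

/-- CDF of the optimal market composition `G_k` for `k ∈ (1/2,1]`. -/
noncomputable def GkCDF (M k v : ℝ) : ℝ :=
  if v < rkFun M k then 0
  else if v < 1 then 1 - (rkFun M k - M) / (v - M)
  else 1


end PostedPrice

open Topology Real ProbabilityTheory

theorem UpperSemicontinuousOn.mul_of_nonneg {α : Type*} [TopologicalSpace α] {f g : α → ℝ}
    {s : Set α} (hf : UpperSemicontinuousOn f s) (hg : UpperSemicontinuousOn g s)
    (hf0 : ∀ x ∈ s, 0 ≤ f x) (hg0 : ∀ x ∈ s, 0 ≤ g x) :
    UpperSemicontinuousOn (fun x => f x * g x) s := by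
  intro x hx y hy
  have hcont : Tendsto (fun ε : ℝ => (f x + ε) * (g x + ε)) (𝓝[>] 0) (𝓝 (f x * g x)) := by
    have hc : Continuous fun ε : ℝ => (f x + ε) * (g x + ε) := by fun_prop
    simpa using (hc.tendsto 0).mono_left nhdsWithin_le_nhds
  obtain ⟨ε, hεy, hε⟩ := ((hcont.eventually (gt_mem_nhds hy)).and self_mem_nhdsWithin).exists
  filter_upwards [hf x hx _ (lt_add_of_pos_right _ hε), hg x hx _ (lt_add_of_pos_right _ hε),
    self_mem_nhdsWithin] with z hfz hgz hz
  exact (mul_lt_mul'' hfz hgz (hf0 z hz) (hg0 z hz)).trans hεy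

theorem UpperSemicontinuousOn.nonempty_and_isCompact_setOf_isMaxOn {α β : Type*}
    [TopologicalSpace α] [LinearOrder β] {f : α → β} {s : Set α} (hs : IsCompact s)
    (hne : s.Nonempty) (hf : UpperSemicontinuousOn f s) :
    {x ∈ s | IsMaxOn f s x}.Nonempty ∧ IsCompact {x ∈ s | IsMaxOn f s x} := by
  obtain ⟨a, ha, hmax⟩ := hf.exists_isMaxOn hne hs
  refine ⟨⟨a, ha, hmax⟩, ?_⟩
  convert hf.isCompact_inter_preimage_Ici hs (f a) using 1
  ext x
  refine and_congr_right fun _ => ⟨fun h => h ha, fun h y hy => ?_⟩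
  exact (isMaxOn_iff.1 hmax y hy).trans h

theorem integral_inv_sub {M a b : ℝ} (hMa : M < a) (hMb : M < b) :
    ∫ v in a..b, (v - M)⁻¹ = log ((b - M) / (a - M)) := by
  rw [intervalIntegral.integral_comp_sub_right (fun x => x⁻¹),
    integral_inv_of_pos (sub_pos.2 hMa) (sub_pos.2 hMb)]

theorem intervalIntegrable_inv_sub {M a b : ℝ} (hMa : M < a) (hMb : M < b) :
    IntervalIntegrable (fun v => (v - M)⁻¹) volume a b :=
  intervalIntegral.intervalIntegrable_inv
    (fun v hv => (sub_pos.2 (lt_min hMa hMb |>.trans_le hv.1)).ne') (by fun_prop)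

theorem eq_of_le_of_integral_eq {f g : ℝ → ℝ} {a b v : ℝ} (hle : ∀ x ∈ Icc a b, f x ≤ g x)
    (hf : IntervalIntegrable f volume a b) (hg : IntervalIntegrable g volume a b)
    (hint : ∫ x in a..b, f x = ∫ x in a..b, g x) (hv : v ∈ Ioc a b)
    (hcont : Tendsto (fun x => g x - f x) (𝓝[<] v) (𝓝 (g v - f v))) : f v = g v := by
  by_contra hne
  have hpos : 0 < g v - f v := sub_pos.2 ((hle v (Ioc_subset_Icc_self hv)).lt_of_ne hne)
  obtain ⟨c, hcv, hc⟩ := mem_nhdsLT_iff_exists_Ioo_subset.1 (hcont.eventually (lt_mem_nhds hpos))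
  have hcv' : max a c < v := max_lt hv.1 hcv
  have hfg : IntervalIntegrable (fun x => g x - f x) volume a b := hg.sub hf
  have h0 : 0 < ∫ x in max a c..v, (g x - f x) := by
    refine intervalIntegral.intervalIntegral_pos_of_pos_on (hfg.mono_set ?_)
      (fun x hx => hc ⟨(le_max_right a c).trans_lt hx.1, hx.2⟩) hcv'
    rw [uIcc_of_le hcv'.le, uIcc_of_le (hv.1.le.trans hv.2)]
    exact Icc_subset_Icc (le_max_left a c) hv.2
  have h1 : ∫ x in max a c..v, (g x - f x) ≤ ∫ x in a..b, (g x - f x) :=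
    intervalIntegral.integral_mono_interval (le_max_left a c) hcv'.le hv.2
      ((ae_restrict_iff' measurableSet_Ioc).2 (ae_of_all _ fun x hx =>
        sub_nonneg.2 (hle x (Ioc_subset_Icc_self hx)))) hfg
  rw [intervalIntegral.integral_sub hg hf, hint, sub_self] at h1
  linarith

namespace PostedPrice

section Survival

variable {G : Measure ℝ}

lemma SG_nonneg (v : ℝ) : 0 ≤ SG G v := ENNReal.toReal_nonneg

lemma SG_antitone [IsFiniteMeasure G] : Antitone (SG G) := fun _ _ huv =>
  ENNReal.toReal_mono (measure_ne_top G _) (measure_mono (Icc_subset_Icc huv le_rfl))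

lemma SG_le_one [IsProbabilityMeasure G] (v : ℝ) : SG G v ≤ 1 :=
  ENNReal.toReal_le_of_le_ofReal zero_le_one (by simpa using prob_le_one)

lemma tendsto_SG_nhdsLT [IsFiniteMeasure G] (a : ℝ) :
    Tendsto (SG G) (𝓝[<] a) (𝓝 (SG G a)) := by
  have hInter : ⋂ δ > (0 : ℝ), Icc (a - δ) 1 = Icc a 1 := by
    ext x
    simp only [mem_iInter, mem_Icc]
    refine ⟨fun h => ⟨le_of_forall_pos_le_add fun δ hδ => ?_, (h 1 one_pos).2⟩,
      fun h δ hδ => ⟨by linarith [h.1], h.2⟩⟩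
    linarith [(h δ hδ).1]
  have hδ : Tendsto (fun δ => G (Icc (a - δ) 1)) (𝓝[>] 0) (𝓝 (G (Icc a 1))) := by
    rw [← hInter]
    exact tendsto_measure_biInter_gt (fun _ _ => nullMeasurableSet_Icc)
      (fun _ _ _ hij => Icc_subset_Icc (by linarith) le_rfl) ⟨1, one_pos, measure_ne_top _ _⟩
  have hsub : Tendsto (fun v => a - v) (𝓝[<] a) (𝓝[>] 0) := by
    refine tendsto_nhdsWithin_iff.2
      ⟨?_, eventually_nhdsWithin_of_forall fun v hv => mem_Ioi.2 (sub_pos.2 hv)⟩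
    have hc : Continuous fun v : ℝ => a - v := by fun_prop
    simpa using (hc.tendsto a).mono_left nhdsWithin_le_nhds
  change Tendsto (fun v => (G (Icc v 1)).toReal) _ (𝓝 (G (Icc a 1)).toReal)
  simpa [Function.comp_def] using
    (ENNReal.tendsto_toReal (measure_ne_top G _)).comp (hδ.comp hsub)

lemma upperSemicontinuous_SG [IsFiniteMeasure G] : UpperSemicontinuous (SG G) := by
  intro a y hy
  rw [← nhdsLT_sup_nhdsGE, eventually_sup]
  exact ⟨(tendsto_SG_nhdsLT a).eventually (gt_mem_nhds hy),
    eventually_nhdsWithin_of_forall fun v hv => (SG_antitone hv).trans_lt hy⟩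

lemma Rstar_nonempty_and_isCompact [IsFiniteMeasure G] {M : ℝ} (hM : M ≤ 1) :
    (Rstar M G).Nonempty ∧ IsCompact (Rstar M G) :=
  UpperSemicontinuousOn.nonempty_and_isCompact_setOf_isMaxOn isCompact_Icc (nonempty_Icc.2 hM)
    ((continuousOn_id.sub continuousOn_const).upperSemicontinuousOn (s := Icc M 1)
      |>.mul_of_nonneg
      (upperSemicontinuous_SG.upperSemicontinuousOn _) (fun _ hr => sub_nonneg.2 hr.1)
      fun _ _ => SG_nonneg _)

lemma measure_Icc_eq_measure_Ici (hG : ProbOn01 G) (v : ℝ) : G (Icc v 1) = G (Ici v) := by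
  have := hG.1
  have hnull : G (Iic 1)ᶜ = 0 :=
    measure_mono_null (compl_subset_compl.2 Icc_subset_Iic_self)
      ((prob_compl_eq_zero_iff measurableSet_Icc).2 hG.2)
  rw [← Ici_inter_Iic, measure_inter_conull hnull]

lemma eq_of_SG_eq {G' : Measure ℝ} (hG : ProbOn01 G) (hG' : ProbOn01 G')
    (h : ∀ v ≤ 1, SG G v = SG G' v) : G = G' := by
  have := hG.1
  have := hG'.1
  refine Measure.ext_of_Ici G G' fun v => ?_
  rw [← measure_Icc_eq_measure_Ici hG, ← measure_Icc_eq_measure_Ici hG']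
  rcases le_or_gt v 1 with hv | hv
  · exact (ENNReal.toReal_eq_toReal_iff' (measure_ne_top _ _) (measure_ne_top _ _)).1 (h v hv)
  · simp [Icc_eq_empty_of_lt hv]

end Survival

/-- For `M < r ≤ 1` this is `t ≥ 0` with `r = M + (1 - M) e^{-t}`; the objective of the
equal-revenue market with cutoff `r` is `Q̄ (1 - M) · logObjective k t`. -/
noncomputable def logRatio (M r : ℝ) : ℝ := log ((1 - M) / (r - M))

noncomputable def logObjective (k t : ℝ) : ℝ := exp (-t) * (k * t + (1 - k))

noncomputable def optimalLog (k : ℝ) : ℝ := if k ≤ 1 / 2 then 0 else (2 * k - 1) / k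

noncomputable def rStar (M k : ℝ) : ℝ := M + (1 - M) * exp (-optimalLog k)

noncomputable def optimalValue (Qbar M k : ℝ) : ℝ :=
  Qbar * (1 - M) * logObjective k (optimalLog k)

/-- On `(-∞, 1]`, the survival function of the paper's `G_k` when `a = r_k`, and of `δ₁` when
`a = 1`; it is meaningless beyond `1`. -/
noncomputable def equalRevenueSF (M a v : ℝ) : ℝ := (a - M) / (max v a - M)

section Optimization

variable {k t : ℝ}

lemma optimalLog_of_half_lt (hk : 1 / 2 < k) : optimalLog k = (2 * k - 1) / k :=
  if_neg hk.not_ge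

lemma optimalLog_nonneg (hk : 0 ≤ k) : 0 ≤ optimalLog k := by
  unfold optimalLog
  split_ifs with h
  · exact le_rfl
  · exact div_nonneg (by linarith [not_le.1 h]) hk

lemma mul_optimalLog_add_pos : 0 < k * optimalLog k + (1 - k) := by
  unfold optimalLog
  split_ifs with h
  · linarith
  · rw [mul_div_cancel₀ _ (by linarith [not_le.1 h])]
    linarith [not_le.1 h]

lemma logObjective_lt (ht : 0 ≤ t) (hne : t ≠ optimalLog k) :
    logObjective k t < logObjective k (optimalLog k) := by
  unfold logObjective
  unfold optimalLog at hne ⊢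
  split_ifs at hne ⊢ with hk
  · have h1 : k * t + (1 - k) < (1 - k) * exp t := by
      nlinarith [mul_lt_mul_of_pos_left (add_one_lt_exp hne) (by linarith : 0 < 1 - k)]
    calc exp (-t) * (k * t + (1 - k)) < exp (-t) * ((1 - k) * exp t) := by gcongr
      _ = exp (-0) * (k * 0 + (1 - k)) := by
        rw [mul_left_comm, ← exp_add]
        simp
  · set T := (2 * k - 1) / k
    have hk : 0 < k := by linarith [not_le.1 hk]
    have hkT : k * T = 2 * k - 1 := mul_div_cancel₀ _ hk.ne'
    have h1 : k * t + (1 - k) < k * exp (t - T) := by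
      nlinarith [mul_lt_mul_of_pos_left (add_one_lt_exp (sub_ne_zero.2 hne)) hk]
    calc exp (-t) * (k * t + (1 - k)) < exp (-t) * (k * exp (t - T)) := by gcongr
      _ = exp (-T) * (k * T + (1 - k)) := by
        rw [hkT, mul_left_comm, ← exp_add]
        ring_nf

lemma logObjective_le (ht : 0 ≤ t) :
    logObjective k t ≤ logObjective k (optimalLog k) := by
  rcases eq_or_ne t (optimalLog k) with h | h
  · rw [h]
  · exact (logObjective_lt ht h).le

end Optimization

section LogRatio

variable {M r k : ℝ}

lemma logRatio_nonneg (hMr : M < r) (hr1 : r ≤ 1) : 0 ≤ logRatio M r :=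
  log_nonneg ((one_le_div (sub_pos.2 hMr)).2 (by linarith))

lemma mul_exp_neg_logRatio (hM : M < 1) (hMr : M < r) :
    (1 - M) * exp (-logRatio M r) = r - M := by
  rw [logRatio, exp_neg, exp_log (div_pos (sub_pos.2 hM) (sub_pos.2 hMr)), inv_div,
    mul_div_cancel₀ _ (sub_pos.2 hM).ne']

lemma rStar_sub (M k : ℝ) : rStar M k - M = (1 - M) * exp (-optimalLog k) := by
  rw [rStar]; ring

lemma logRatio_rStar (hM : M < 1) : logRatio M (rStar M k) = optimalLog k := by
  rw [logRatio, rStar_sub, div_mul_cancel_left₀ (sub_pos.2 hM).ne', exp_neg, inv_inv, log_exp]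

lemma rStar_mem_Ioc (hM : M < 1) (hk : 0 ≤ k) : rStar M k ∈ Ioc M 1 := by
  have h1M : 0 < 1 - M := sub_pos.2 hM
  have hexp : exp (-optimalLog k) ≤ 1 := exp_le_one_iff.2 (neg_nonpos.2 (optimalLog_nonneg hk))
  rw [rStar]
  constructor <;> nlinarith [exp_pos (-optimalLog k)]

lemma rStar_of_le_half (hk : k ≤ 1 / 2) : rStar M k = 1 := by
  rw [rStar, optimalLog, if_pos hk]
  simp

lemma rStar_of_half_lt (hk : 1 / 2 < k) : rStar M k = rkFun M k := by
  rw [rStar, rkFun, optimalLog_of_half_lt hk, neg_div]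

lemma rStar_lt_one (hM : M < 1) (hk : 1 / 2 < k) : rStar M k < 1 := by
  have hT : 0 < optimalLog k := by
    rw [optimalLog_of_half_lt hk]
    exact div_pos (by linarith) (by linarith)
  rw [rStar]
  nlinarith [exp_lt_one_iff.2 (neg_neg_of_pos hT)]

end LogRatio

section EqualRevenue

variable {M a : ℝ} {G : Measure ℝ}

lemma equalRevenueSF_of_le {v : ℝ} (hMa : M < a) (hva : v ≤ a) : equalRevenueSF M a v = 1 := by
  rw [equalRevenueSF, max_eq_right hva, div_self (sub_pos.2 hMa).ne']

lemma equalRevenueSF_of_ge {v : ℝ} (hav : a ≤ v) :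
    equalRevenueSF M a v = (a - M) / (v - M) := by
  rw [equalRevenueSF, max_eq_left hav]

lemma continuous_equalRevenueSF (hMa : M < a) : Continuous (equalRevenueSF M a) :=
  continuous_const.div ((continuous_id.max continuous_const).sub continuous_const)
    fun v => (sub_pos.2 (hMa.trans_le (le_max_right v a))).ne'

lemma integral_equalRevenueSF (hMa : M < a) (ha1 : a ≤ 1) :
    ∫ v in a..1, equalRevenueSF M a v = (a - M) * logRatio M a := by
  have hcongr : EqOn (equalRevenueSF M a) (fun v => (a - M) * (v - M)⁻¹) (uIcc a 1) := by
    intro v hv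
    rw [uIcc_of_le ha1] at hv
    rw [equalRevenueSF_of_ge hv.1, div_eq_mul_inv]
  rw [intervalIntegral.integral_congr hcongr, intervalIntegral.integral_const_mul,
    integral_inv_sub hMa (hMa.trans_le ha1), logRatio]

lemma mem_Rstar_of_SG_eq (hMa : M < a) (ha1 : a ≤ 1)
    (hS : ∀ v ≤ 1, SG G v = equalRevenueSF M a v) : a ∈ Rstar M G := by
  refine ⟨⟨hMa.le, ha1⟩, fun r hr => ?_⟩
  have hpos : 0 < max r a - M := sub_pos.2 (hMa.trans_le (le_max_right r a))
  rw [hS a ha1, hS r hr.2, equalRevenueSF_of_le hMa le_rfl, mul_one, equalRevenueSF,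
    mul_div_assoc', div_le_iff₀ hpos]
  nlinarith [le_max_left r a]

lemma PiG_of_SG_eq (Qbar : ℝ) (hMa : M < a) (ha1 : a ≤ 1)
    (hS : ∀ v ≤ 1, SG G v = equalRevenueSF M a v) : PiG Qbar M G a = Qbar * (a - M) := by
  rw [PiG, hS a ha1, equalRevenueSF_of_le hMa le_rfl, mul_one]

lemma CSG_of_SG_eq (Qbar : ℝ) (hMa : M < a) (ha1 : a ≤ 1)
    (hS : ∀ v ≤ 1, SG G v = equalRevenueSF M a v) :
    CSG Qbar G a = Qbar * ((a - M) * logRatio M a) := by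
  have hcongr : EqOn (SG G) (equalRevenueSF M a) (uIcc a 1) := fun v hv =>
    hS v (by rw [uIcc_of_le ha1] at hv; exact hv.2)
  rw [CSG, intervalIntegral.integral_congr hcongr, integral_equalRevenueSF hMa ha1]

end EqualRevenue

section Bound

variable {Qbar M k r : ℝ} {G : Measure ℝ}

lemma Jpp_left_eq_zero (hr : M ∈ Rstar M G) : Jpp Qbar M k G M = 0 := by
  have hS : ∀ v ∈ uIoc M 1, SG G v = 0 := by
    intro v hv
    rw [uIoc_of_le hr.1.2] at hv
    have h := hr.2 v ⟨hv.1.le, hv.2⟩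
    rw [sub_self, zero_mul] at h
    exact le_antisymm (by nlinarith [sub_pos.2 hv.1, SG_nonneg (G := G) v]) (SG_nonneg v)
  rw [Jpp, CSG, PiG, intervalIntegral.integral_zero_ae (ae_of_all _ hS)]
  ring

lemma integral_SG_le_of_mem_Rstar [IsFiniteMeasure G] (hr : r ∈ Rstar M G) (hMr : M < r) :
    ∫ v in r..1, SG G v ≤ (r - M) * SG G r * logRatio M r := by
  have hM1 := hMr.trans_le hr.1.2
  calc ∫ v in r..1, SG G v ≤ ∫ v in r..1, (r - M) * SG G r * (v - M)⁻¹ := by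
        refine intervalIntegral.integral_mono_on hr.1.2
          (SG_antitone.antitoneOn _).intervalIntegrable
          ((intervalIntegrable_inv_sub hMr hM1).const_mul _) fun v hv => ?_
        rw [← div_eq_mul_inv, le_div_iff₀ (sub_pos.2 (hMr.trans_le hv.1)), mul_comm]
        exact hr.2 v ⟨hr.1.1.trans hv.1, hv.2⟩
    _ = (r - M) * SG G r * logRatio M r := by
        rw [intervalIntegral.integral_const_mul, integral_inv_sub hMr hM1, logRatio]

/-- The three terms are the slacks in the integral bound, in `S_G(r) ≤ 1` and in the
maximality of `optimalLog`; equality `J_k = optimalValue` forces each to vanish. -/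
lemma optimalValue_sub_Jpp (hM : M < 1) (hMr : M < r) :
    optimalValue Qbar M k - Jpp Qbar M k G r
      = Qbar * k * ((r - M) * SG G r * logRatio M r - ∫ v in r..1, SG G v)
        + Qbar * ((r - M) * (1 - SG G r)) * (k * logRatio M r + (1 - k))
        + Qbar * (1 - M) * (logObjective k (optimalLog k) - logObjective k (logRatio M r)) := by
  rw [optimalValue, Jpp, CSG, PiG, logObjective, logObjective]
  linear_combination (Qbar * (k * logRatio M r + (1 - k))) * mul_exp_neg_logRatio hM hMr

lemma optimalValue_pos (hQ : 0 < Qbar) (hM : M < 1) : 0 < optimalValue Qbar M k :=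
  mul_pos (mul_pos hQ (sub_pos.2 hM)) (mul_pos (exp_pos _) mul_optimalLog_add_pos)

lemma optimalValue_sub_Jpp_terms_nonneg [IsProbabilityMeasure G] (hQ : 0 ≤ Qbar) (hM : M < 1)
    (hk0 : 0 ≤ k) (hk1 : k ≤ 1) (hr : r ∈ Rstar M G) (hMr : M < r) :
    0 ≤ Qbar * k * ((r - M) * SG G r * logRatio M r - ∫ v in r..1, SG G v) ∧
      0 ≤ Qbar * ((r - M) * (1 - SG G r)) * (k * logRatio M r + (1 - k)) ∧
      0 ≤ Qbar * (1 - M) * (logObjective k (optimalLog k) - logObjective k (logRatio M r)) := by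
  have ht := logRatio_nonneg hMr hr.1.2
  refine ⟨mul_nonneg (mul_nonneg hQ hk0) (sub_nonneg.2 (integral_SG_le_of_mem_Rstar hr hMr)),
    mul_nonneg (mul_nonneg hQ (mul_nonneg (sub_pos.2 hMr).le (sub_nonneg.2 (SG_le_one r))))
      (add_nonneg (mul_nonneg hk0 ht) (sub_nonneg.2 hk1)),
    mul_nonneg (mul_nonneg hQ (sub_pos.2 hM).le) (sub_nonneg.2 (logObjective_le ht))⟩

lemma Jpp_le_optimalValue [IsProbabilityMeasure G] (hQ : 0 < Qbar) (hM : M < 1) (hk0 : 0 ≤ k)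
    (hk1 : k ≤ 1) (hr : r ∈ Rstar M G) : Jpp Qbar M k G r ≤ optimalValue Qbar M k := by
  rcases hr.1.1.eq_or_lt with rfl | hMr
  · rw [Jpp_left_eq_zero hr]
    exact (optimalValue_pos hQ hM).le
  obtain ⟨h1, h2, h3⟩ := optimalValue_sub_Jpp_terms_nonneg hQ.le hM hk0 hk1 hr hMr
  linarith [optimalValue_sub_Jpp (Qbar := Qbar) (k := k) (G := G) hM hMr]

lemma eq_of_Jpp_eq_optimalValue [IsProbabilityMeasure G] (hQ : 0 < Qbar) (hM : M < 1)
    (hk0 : 0 ≤ k) (hk1 : k ≤ 1) (hr : r ∈ Rstar M G)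
    (h : Jpp Qbar M k G r = optimalValue Qbar M k) :
    r = rStar M k ∧ SG G r = 1 ∧ ∫ v in r..1, SG G v = (r - M) * logRatio M r := by
  have hMr : M < r := by
    refine hr.1.1.lt_of_ne fun hrM => ?_
    subst hrM
    exact (optimalValue_pos hQ hM).ne' (h.symm.trans (Jpp_left_eq_zero hr))
  obtain ⟨h1, h2, h3⟩ := optimalValue_sub_Jpp_terms_nonneg hQ.le hM hk0 hk1 hr hMr
  have hsum := optimalValue_sub_Jpp (Qbar := Qbar) (k := k) (G := G) hM hMr
  rw [← h, sub_self, eq_comm] at hsum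
  obtain ⟨hAB, hC⟩ := (add_eq_zero_iff_of_nonneg (add_nonneg h1 h2) h3).1 hsum
  obtain ⟨hA, hB⟩ := (add_eq_zero_iff_of_nonneg h1 h2).1 hAB
  have htT : logRatio M r = optimalLog k := by
    by_contra hne
    exact (mul_pos (mul_pos hQ (sub_pos.2 hM))
      (sub_pos.2 (logObjective_lt (logRatio_nonneg hMr hr.1.2) hne))).ne' hC
  have hSr : SG G r = 1 := by
    rw [htT] at hB
    simp only [mul_eq_zero, hQ.ne', (sub_pos.2 hMr).ne', mul_optimalLog_add_pos.ne',
      false_or, or_false] at hB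
    linarith
  have hrr : r = rStar M k := by
    linarith [mul_exp_neg_logRatio hM hMr, htT ▸ rStar_sub M k]
  refine ⟨hrr, hSr, ?_⟩
  rcases hk0.eq_or_lt with rfl | hk
  · rw [hrr, rStar_of_le_half (by norm_num)]
    simp [logRatio]
  · rw [hSr, mul_one] at hA
    linarith [(mul_eq_zero.1 hA).resolve_left (mul_pos hQ hk).ne']

end Bound

section Characterization

variable {Qbar M k a : ℝ} {G : Measure ℝ}

lemma SG_eq_equalRevenueSF_of_integral_eq [IsProbabilityMeasure G] (hMa : M < a)
    (ha : a ∈ Rstar M G) (hSa : SG G a = 1)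
    (hint : ∫ v in a..1, SG G v = (a - M) * logRatio M a) :
    ∀ v ≤ 1, SG G v = equalRevenueSF M a v := by
  intro v hv1
  rcases le_or_gt v a with hva | hav
  · rw [equalRevenueSF_of_le hMa hva]
    exact le_antisymm (SG_le_one v) (hSa ▸ SG_antitone hva)
  refine eq_of_le_of_integral_eq (fun x hx => ?_) (SG_antitone.antitoneOn _).intervalIntegrable
    ((continuous_equalRevenueSF hMa).intervalIntegrable _ _)
    (hint.trans (integral_equalRevenueSF hMa ha.1.2).symm) ⟨hav, hv1⟩
    ((((continuous_equalRevenueSF hMa).tendsto v).mono_left nhdsWithin_le_nhds).sub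
      (tendsto_SG_nhdsLT v))
  have h := ha.2 x ⟨hMa.le.trans hx.1, hx.2⟩
  rw [hSa, mul_one] at h
  rw [equalRevenueSF_of_ge hx.1, le_div_iff₀ (sub_pos.2 (hMa.trans_le hx.1)), mul_comm]
  exact h

lemma Vpp_eq_optimalValue (hQ : 0 < Qbar) (hM : M < 1) (hk0 : 0 ≤ k) (hk1 : k ≤ 1)
    {G₀ : Measure ℝ} {r₀ : ℝ} (hG₀ : ProbOn01 G₀) (hr₀ : r₀ ∈ Rstar M G₀)
    (h : Jpp Qbar M k G₀ r₀ = optimalValue Qbar M k) :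
    Vpp Qbar M k = optimalValue Qbar M k := by
  refine IsGreatest.csSup_eq ⟨⟨G₀, hG₀, r₀, hr₀, h.symm⟩, ?_⟩
  rintro _ ⟨G, hG, r, hr, rfl⟩
  have := hG.1
  exact Jpp_le_optimalValue hQ hM hk0 hk1 hr

theorem isMaximizer_of_SG_eq_equalRevenueSF (hQ : 0 < Qbar) (hM : M < 1) (hk0 : 0 ≤ k)
    (hk1 : k ≤ 1) {Gs : Measure ℝ} (hGs : ProbOn01 Gs)
    (hS : ∀ v ≤ 1, SG Gs v = equalRevenueSF M (rStar M k) v) :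
    rStar M k ∈ Rstar M Gs ∧ Jpp Qbar M k Gs (rStar M k) = optimalValue Qbar M k ∧
      Vpp Qbar M k = optimalValue Qbar M k ∧
      ∀ G, ProbOn01 G → ∀ r ∈ Rstar M G,
        Jpp Qbar M k G r = Vpp Qbar M k → G = Gs ∧ r = rStar M k := by
  obtain ⟨hMa, ha1⟩ := rStar_mem_Ioc hM hk0
  have hmem := mem_Rstar_of_SG_eq hMa ha1 hS
  have hJ : Jpp Qbar M k Gs (rStar M k) = optimalValue Qbar M k := by
    rw [Jpp, CSG_of_SG_eq Qbar hMa ha1 hS, PiG_of_SG_eq Qbar hMa ha1 hS, logRatio_rStar hM,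
      rStar_sub, optimalValue, logObjective]
    ring
  have hV := Vpp_eq_optimalValue hQ hM hk0 hk1 hGs hmem hJ
  refine ⟨hmem, hJ, hV, fun G hG r hr hJr => ?_⟩
  have := hG.1
  obtain ⟨rfl, hSr, hint⟩ := eq_of_Jpp_eq_optimalValue hQ hM hk0 hk1 hr (hJr.trans hV)
  refine ⟨eq_of_SG_eq hG hGs fun v hv => ?_, rfl⟩
  rw [hS v hv, SG_eq_equalRevenueSF_of_integral_eq hMa hr hSr hint v hv]

end Characterization

section Candidates

variable {Qbar M k : ℝ} {G : Measure ℝ}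

lemma probOn01_dirac_one : ProbOn01 (Measure.dirac (1 : ℝ)) :=
  ⟨inferInstance, Measure.dirac_apply_of_mem (by norm_num)⟩

lemma SG_dirac_one {v : ℝ} (hv : v ≤ 1) : SG (Measure.dirac 1) v = 1 := by
  simp [SG, Measure.dirac_apply_of_mem (mem_Icc.2 ⟨hv, le_rfl⟩)]

lemma SG_eq_one_sub_leftLim_cdf (hG : ProbOn01 G) (v : ℝ) :
    SG G v = 1 - Function.leftLim (cdf G) v := by
  have := hG.1
  have hle : Function.leftLim (cdf G) v ≤ 1 :=
    ((monotone_cdf G).leftLim_le le_rfl).trans (cdf_le_one G v)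
  rw [SG, measure_Icc_eq_measure_Ici hG]
  conv_lhs => rw [← measure_cdf G]
  rw [(cdf G).measure_Ici (tendsto_cdf_atTop G),
    ENNReal.toReal_ofReal (sub_nonneg.2 hle)]

lemma GkCDF_of_lt_one (hM : M < 1) (hk : 1 / 2 < k) {w : ℝ} (hw : w < 1) :
    GkCDF M k w = 1 - equalRevenueSF M (rStar M k) w := by
  have hMa := (rStar_mem_Ioc (k := k) hM (by linarith)).1
  rw [GkCDF, ← rStar_of_half_lt hk]
  split_ifs with h
  · rw [equalRevenueSF_of_le hMa h.le, sub_self]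
  · rw [equalRevenueSF_of_ge (not_lt.1 h)]

lemma SG_eq_equalRevenueSF_of_GkCDF (hG : ProbOn01 G) (hM : M < 1) (hk : 1 / 2 < k)
    (hF : ∀ v, (G (Iic v)).toReal = GkCDF M k v) :
    ∀ v ≤ 1, SG G v = equalRevenueSF M (rStar M k) v := by
  intro v hv
  have := hG.1
  have hcdf : cdf G = GkCDF M k :=
    funext fun w => (cdf_eq_real G w).trans (hF w)
  have hc := continuous_equalRevenueSF (rStar_mem_Ioc (k := k) hM (by linarith)).1
  have hlim : Tendsto (GkCDF M k) (𝓝[<] v) (𝓝 (1 - equalRevenueSF M (rStar M k) v)) := by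
    refine (((continuous_const.sub hc).tendsto v).mono_left nhdsWithin_le_nhds).congr' ?_
    filter_upwards [self_mem_nhdsWithin] with w hw
    exact (GkCDF_of_lt_one hM hk (hw.trans_le hv)).symm
  rw [SG_eq_one_sub_leftLim_cdf hG, hcdf, leftLim_eq_of_tendsto hlim]
  ring

lemma optimalValue_of_le_half (hk : k ≤ 1 / 2) :
    optimalValue Qbar M k = Qbar * (1 - k) * (1 - M) := by
  rw [optimalValue, logObjective, optimalLog, if_pos hk]
  simp only [neg_zero, exp_zero, mul_zero, zero_add, one_mul]
  ring

lemma optimalValue_of_half_lt (hk : 1 / 2 < k) :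
    optimalValue Qbar M k = Qbar * k * (1 - M) * exp (-(2 * k - 1) / k) := by
  rw [optimalValue, logObjective, optimalLog_of_half_lt hk, mul_div_cancel₀ _ (by linarith),
    neg_div]
  ring

end Candidates

/-- (i) `R*(G)` is nonempty and compact for every Borel probability
measure `G` on `[0,1]`; (ii) for `k ∈ [0,1/2]`, `V_k^{pp} = Q̄(1−k)(1−M)` and the
unique maximizing pair is `(δ₁, 1)`; (iii) for `k ∈ (1/2,1]`, with
`r_k = M + (1−M)e^{−(2k−1)/k}` and `G_k` the shifted equal-revenue distribution with
CDF `GkCDF`, the pair `(G_k, r_k)` is the unique maximizer,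
`V_k^{pp} = Q̄·k·(1−M)·e^{−(2k−1)/k}`, `Π_{G_k}(r_k) = Q̄(1−M)e^{−(2k−1)/k}` and
`CS_{G_k}(r_k) = Q̄(1−M)e^{−(2k−1)/k}·(2k−1)/k`. -/
theorem posted_price_optimal_market
    (Qbar M : ℝ) (hQbar : 0 < Qbar) (hM : M ∈ Set.Ico (0:ℝ) 1) :
    -- (i)
    (∀ G : Measure ℝ, ProbOn01 G → (Rstar M G).Nonempty ∧ IsCompact (Rstar M G)) ∧
    -- (ii)
    (∀ k ∈ Set.Icc (0:ℝ) (1/2),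
      Vpp Qbar M k = Qbar * (1 - k) * (1 - M) ∧
      ((1:ℝ) ∈ Rstar M (Measure.dirac 1) ∧
        Jpp Qbar M k (Measure.dirac 1) 1 = Vpp Qbar M k) ∧
      (∀ G : Measure ℝ, ProbOn01 G → ∀ r ∈ Rstar M G,
        Jpp Qbar M k G r = Vpp Qbar M k → G = Measure.dirac 1 ∧ r = 1)) ∧
    -- (iii)
    (∀ k ∈ Set.Ioc (1/2 : ℝ) 1,
      rkFun M k ∈ Set.Ioo M 1 ∧
      ∀ Gk : Measure ℝ, ProbOn01 Gk →
        (∀ v : ℝ, (Gk (Set.Iic v)).toReal = GkCDF M k v) →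
        (rkFun M k ∈ Rstar M Gk ∧
         Jpp Qbar M k Gk (rkFun M k) = Vpp Qbar M k ∧
         Vpp Qbar M k = Qbar * k * (1 - M) * Real.exp (-(2*k - 1)/k) ∧
         PiG Qbar M Gk (rkFun M k) = Qbar * (1 - M) * Real.exp (-(2*k - 1)/k) ∧
         CSG Qbar Gk (rkFun M k)
           = Qbar * (1 - M) * Real.exp (-(2*k - 1)/k) * ((2*k - 1)/k) ∧
         (∀ G : Measure ℝ, ProbOn01 G → ∀ r ∈ Rstar M G,
           Jpp Qbar M k G r = Vpp Qbar M k → G = Gk ∧ r = rkFun M k))) := by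
  refine ⟨fun G hG => have := hG.1; Rstar_nonempty_and_isCompact hM.2.le, fun k hk => ?_,
    fun k hk => ?_⟩
  · obtain ⟨hmem, hJ, hV, huniq⟩ := isMaximizer_of_SG_eq_equalRevenueSF hQbar hM.2 hk.1
      (by linarith [hk.2]) probOn01_dirac_one fun v hv => by
        rw [rStar_of_le_half hk.2, SG_dirac_one hv, equalRevenueSF_of_le hM.2 hv]
    rw [rStar_of_le_half hk.2] at hmem hJ huniq
    exact ⟨hV.trans (optimalValue_of_le_half hk.2), ⟨hmem, hJ.trans hV.symm⟩, huniq⟩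
  · have hk0 : 0 ≤ k := by linarith [hk.1]
    obtain ⟨hMa, ha1⟩ := rStar_mem_Ioc hM.2 hk0
    rw [← rStar_of_half_lt hk.1]
    refine ⟨⟨hMa, rStar_lt_one hM.2 hk.1⟩, fun Gk hGk hF => ?_⟩
    have hS := SG_eq_equalRevenueSF_of_GkCDF hGk hM.2 hk.1 hF
    obtain ⟨hmem, hJ, hV, huniq⟩ :=
      isMaximizer_of_SG_eq_equalRevenueSF hQbar hM.2 hk0 hk.2 hGk hS
    have hexp : exp (-optimalLog k) = exp (-(2 * k - 1) / k) := by
      rw [optimalLog_of_half_lt hk.1, neg_div]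
    refine ⟨hmem, hJ.trans hV.symm, hV.trans (optimalValue_of_half_lt hk.1), ?_, ?_, huniq⟩
    · rw [PiG_of_SG_eq Qbar hMa ha1 hS, rStar_sub, hexp]
      ring
    · rw [CSG_of_SG_eq Qbar hMa ha1 hS, logRatio_rStar hM.2, rStar_sub, hexp,
        optimalLog_of_half_lt hk.1]
      ring

end PostedPrice
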